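/- Let A = (a_{ij}) ∈ ℝ^{n×n} be a symmetric matrix. If the quadratic function q_A(x) = ⟨Ax, x⟩ is spherically quasi-convex on C = 𝕊^{n-1} ∩ ℝⁿ₊₊, then A is a Z-matrix, i.e., a_{ij} ≤ 0 for all i ≠ j. -/

import Mathlib

open scoped InnerProductSpace

/-- The (constant-speed) parametrization on `[0,1]` of the minimal geodesic segment of the
unit sphere joining `x` to a non-antipodal point `y`, namely
`t ↦ (cos(t·d(x,y)) - ⟪x,y⟫ sin(t·d(x,y))/√(1-⟪x,y⟫²)) • x + (sin(t·d(x,y))/√(1-⟪x,y⟫²)) • y`,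
where `d(x,y) = arccos ⟪x,y⟫` is the intrinsic distance on the sphere. -/
noncomputable def geoSeg {n : ℕ} (x y : EuclideanSpace ℝ (Fin n)) (t : ℝ) :
    EuclideanSpace ℝ (Fin n) :=
  (Real.cos (t * Real.arccos ⟪x, y⟫_ℝ) -
      ⟪x, y⟫_ℝ * Real.sin (t * Real.arccos ⟪x, y⟫_ℝ) / Real.sqrt (1 - ⟪x, y⟫_ℝ ^ 2)) • x +
    (Real.sin (t * Real.arccos ⟪x, y⟫_ℝ) / Real.sqrt (1 - ⟪x, y⟫_ℝ ^ 2)) • y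

/-- `γ`, parametrized (with constant speed) on `[0,1]`, is a minimal geodesic segment of the
unit sphere joining `x` to `y`.  For `y ≠ -x` it is the unique such segment `geoSeg x y`
(which is constantly `x` when `y = x`); for `y = -x` it is
`t ↦ cos(tπ) • x + sin(tπ) • v` for some unit vector `v` orthogonal to `x`. -/
def IsMinGeodesic {n : ℕ} (γ : ℝ → EuclideanSpace ℝ (Fin n))
    (x y : EuclideanSpace ℝ (Fin n)) : Prop :=
  ‖x‖ = 1 ∧ ‖y‖ = 1 ∧
    ((y ≠ -x ∧ γ = geoSeg x y) ∨
      (y = -x ∧ ∃ v : EuclideanSpace ℝ (Fin n), ‖v‖ = 1 ∧ ⟪x, v⟫_ℝ = 0 ∧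
        γ = fun t => Real.cos (t * Real.pi) • x + Real.sin (t * Real.pi) • v))

/-- A subset of the unit sphere is spherically convex if it contains every minimal geodesic
segment joining any two of its points. -/
def SphericallyConvex {n : ℕ} (C : Set (EuclideanSpace ℝ (Fin n))) : Prop :=
  ∀ x ∈ C, ∀ y ∈ C, ∀ γ : ℝ → EuclideanSpace ℝ (Fin n),
    IsMinGeodesic γ x y → ∀ t ∈ Set.Icc (0 : ℝ) 1, γ t ∈ C

/-- `f` is spherically quasi-convex on `C`: along every minimal geodesic segment lying in `C`,
the composition with `f` is quasi-convex, i.e. `f(γ t) ≤ max (f(γ t₁)) (f(γ t₂))` for all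
`t ∈ [t₁, t₂]`. -/
def SphQuasiConvexOn {n : ℕ} (C : Set (EuclideanSpace ℝ (Fin n)))
    (f : EuclideanSpace ℝ (Fin n) → ℝ) : Prop :=
  ∀ x ∈ C, ∀ y ∈ C, ∀ γ : ℝ → EuclideanSpace ℝ (Fin n),
    IsMinGeodesic γ x y → (∀ t ∈ Set.Icc (0 : ℝ) 1, γ t ∈ C) →
    ∀ t₁ t t₂ : ℝ, 0 ≤ t₁ → t₁ ≤ t → t ≤ t₂ → t₂ ≤ 1 →
      f (γ t) ≤ max (f (γ t₁)) (f (γ t₂))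

/-- Multiplication of an `n × n` real matrix with a vector of `EuclideanSpace ℝ (Fin n)`. -/
noncomputable def mulVecE {n : ℕ} (A : Matrix (Fin n) (Fin n) ℝ)
    (x : EuclideanSpace ℝ (Fin n)) : EuclideanSpace ℝ (Fin n) :=
  WithLp.toLp 2 (fun i => ∑ j, A i j * x j)


open Real in
lemma geoSeg_zero {n : ℕ} (x y : EuclideanSpace ℝ (Fin n)) : geoSeg x y 0 = x := by
  simp [geoSeg]

open Real in
lemma geoSeg_one {n : ℕ} (x y : EuclideanSpace ℝ (Fin n))
    (h1 : -1 < ⟪x,y⟫_ℝ) (h2 : ⟪x,y⟫_ℝ < 1) : geoSeg x y 1 = y := by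
  have hs : Real.sqrt (1 - ⟪x,y⟫_ℝ^2) ≠ 0 := by
    refine ne_of_gt (Real.sqrt_pos.mpr ?_); nlinarith
  simp only [geoSeg, one_mul, Real.cos_arccos h1.le h2.le,
    Real.sin_arccos]
  rw [mul_div_assoc, div_self hs]
  simp

lemma norm_smul_add_smul {n : ℕ} (x y : EuclideanSpace ℝ (Fin n)) (α β : ℝ) :
    ‖α • x + β • y‖^2 = α^2*‖x‖^2 + 2*(α*β*⟪x,y⟫_ℝ) + β^2*‖y‖^2 := by
  rw [norm_add_sq_real, real_inner_smul_left, real_inner_smul_right, norm_smul, norm_smul]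
  simp [mul_pow, sq_abs]
  ring

lemma geoSeg_mem {n : ℕ} (x y : EuclideanSpace ℝ (Fin n))
    (hx : ‖x‖ = 1) (hy : ‖y‖ = 1) (hc0 : 0 < ⟪x,y⟫_ℝ) (hc1 : ⟪x,y⟫_ℝ < 1)
    (hxp : ∀ k, 0 < x k) (hyp : ∀ k, 0 < y k) (t : ℝ) (ht : t ∈ Set.Icc (0:ℝ) 1) :
    geoSeg x y t ∈ (Metric.sphere (0 : EuclideanSpace ℝ (Fin n)) 1 ∩ {x | ∀ i, 0 < x i}) := by
  set c := ⟪x,y⟫_ℝ with hc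
  have hs2 : (0:ℝ) < 1 - c^2 := by nlinarith
  have hs : (0:ℝ) < Real.sqrt (1 - c^2) := Real.sqrt_pos.mpr hs2
  set s := Real.sqrt (1 - c^2) with hsdef
  have hssq : s^2 = 1 - c^2 := Real.sq_sqrt hs2.le
  have hd0 : 0 < Real.arccos c := Real.arccos_pos.mpr hc1
  have hdlt : Real.arccos c < Real.pi / 2 := (Real.arccos_lt_pi_div_two).mpr hc0
  set d := Real.arccos c with hddef
  have hcd : Real.cos d = c := Real.cos_arccos (by linarith) hc1.le
  have hsd : Real.sin d = s := by rw [hddef, Real.sin_arccos]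
  set u := t * d with hu
  have hu0 : 0 ≤ u := mul_nonneg ht.1 hd0.le
  have hud : u ≤ d := by
    calc u ≤ 1 * d := by apply mul_le_mul_of_nonneg_right ht.2 hd0.le
    _ = d := one_mul d
  have hsinu : 0 ≤ Real.sin u := Real.sin_nonneg_of_nonneg_of_le_pi hu0
    (by linarith [Real.pi_pos])
  set α := Real.cos u - c * Real.sin u / s with hα
  set β := Real.sin u / s with hβ
  have hαs : α * s = Real.sin (d - u) := by
    rw [Real.sin_sub, hcd, hsd, hα]; field_simp
  have hα0 : 0 ≤ α := by
    have h1 : 0 ≤ Real.sin (d - u) := Real.sin_nonneg_of_nonneg_of_le_pi (by linarith)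
      (by linarith [Real.pi_pos])
    nlinarith
  have hβ0 : 0 ≤ β := div_nonneg hsinu hs.le
  have hpos : 0 < α ∨ 0 < β := by
    rcases eq_or_lt_of_le hu0 with h|h
    · left
      have : Real.sin u = 0 := by rw [← h]; simp
      have : Real.cos u = 1 := by rw [← h]; simp
      rw [hα, this, ‹Real.sin u = 0›]; simp
    · right
      exact div_pos (Real.sin_pos_of_pos_of_lt_pi h (by linarith [Real.pi_pos])) hs
  have hγ : geoSeg x y t = α • x + β • y := rfl
  constructor
  · rw [mem_sphere_zero_iff_norm, hγ]
    have h2 : ‖α • x + β • y‖^2 = 1 := by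
      rw [norm_smul_add_smul, hx, hy, ← hc]
      have : α^2 + 2*(α*β*c) + β^2 = 1 := by
        have e1 : α * s = s * Real.cos u - c * Real.sin u := by rw [hα]; field_simp
        have e2 : β * s = Real.sin u := by rw [hβ]; field_simp
        have hsin2 := Real.sin_sq_add_cos_sq u
        have h3 : (α*s)^2 + 2*((α*s)*(β*s)*c) + (β*s)^2 = s^2 := by
          rw [e1, e2]; linear_combination s^2 * hsin2 - Real.sin u^2 * hssq
        have h4 : (α^2 + 2*(α*β*c) + β^2) * s^2 = 1 * s^2 := by linear_combination h3
        exact mul_right_cancel₀ (pow_ne_zero 2 hs.ne') h4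
      linarith [this]
    rw [← Real.sqrt_sq (norm_nonneg _), h2, Real.sqrt_one]
  · intro k
    rw [hγ]
    have hco : (α • x + β • y) k = α * x k + β * y k := rfl
    rw [hco]
    rcases hpos with h|h
    · have := hxp k; have := hyp k; nlinarith
    · have := hxp k; have := hyp k; nlinarith

section aux
variable {n : ℕ} (i j : Fin n)

/-- vector cosθ e_i + sinθ e_j -/
noncomputable def Wv (θ : ℝ) : EuclideanSpace ℝ (Fin n) :=
  WithLp.toLp 2 (fun k => if k = i then Real.cos θ else if k = j then Real.sin θ else 0)

def Zv : EuclideanSpace ℝ (Fin n) :=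
  WithLp.toLp 2 (fun k => if k = i then (0:ℝ) else if k = j then 0 else 1)

noncomputable def ccard : ℝ := (Finset.univ.filter (fun k : Fin n => ¬(k = i ∨ k = j))).card

noncomputable def Xv (ε θ : ℝ) : EuclideanSpace ℝ (Fin n) :=
  (Real.sqrt (1 + ccard i j * ε^2))⁻¹ • (Wv i j θ + ε • Zv i j)

variable (hij : i ≠ j)

lemma Xv_coord (ε θ : ℝ) (k : Fin n) :
    Xv i j ε θ k = (Real.sqrt (1 + ccard i j * ε^2))⁻¹ *
      (if k = i then Real.cos θ else if k = j then Real.sin θ else ε) := by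
  have : Xv i j ε θ k = (Real.sqrt (1 + ccard i j * ε^2))⁻¹ * (Wv i j θ k + ε * Zv i j k) := rfl
  rw [this]
  by_cases h1 : k = i <;> by_cases h2 : k = j <;> simp [Wv, Zv, h1, h2]

include hij in
lemma sum_mul_Wv (f : Fin n → ℝ) (θ : ℝ) :
    ∑ l, f l * Wv i j θ l = f i * Real.cos θ + f j * Real.sin θ := by
  have h : ∀ l, f l * Wv i j θ l =
      (if l = i then f i * Real.cos θ else 0) + (if l = j then f j * Real.sin θ else 0) := by
    intro l
    by_cases h1 : l = i <;> by_cases h2 : l = j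
    · exact absurd (h1 ▸ h2) hij
    all_goals simp [Wv, h1, h2, hij, Ne.symm hij]
  rw [Finset.sum_congr rfl (fun l _ => h l), Finset.sum_add_distrib]
  simp

include hij in
lemma inner_UU (ε θ₁ θ₂ : ℝ) :
    ∑ k, (if k = i then Real.cos θ₁ else if k = j then Real.sin θ₁ else ε) *
         (if k = i then Real.cos θ₂ else if k = j then Real.sin θ₂ else ε)
      = Real.cos θ₁ * Real.cos θ₂ + Real.sin θ₁ * Real.sin θ₂ + ccard i j * ε^2 := by
  have h : ∀ k, (if k = i then Real.cos θ₁ else if k = j then Real.sin θ₁ else ε) *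
         (if k = i then Real.cos θ₂ else if k = j then Real.sin θ₂ else ε) =
      (if k = i then Real.cos θ₁ * Real.cos θ₂ else 0) +
      (if k = j then Real.sin θ₁ * Real.sin θ₂ else 0) +
      (if ¬(k = i ∨ k = j) then ε^2 else 0) := by
    intro k
    by_cases h1 : k = i <;> by_cases h2 : k = j
    · exact absurd (h1 ▸ h2) hij
    all_goals simp [h1, h2, hij, Ne.symm hij]; try ring
  rw [Finset.sum_congr rfl (fun k _ => h k), Finset.sum_add_distrib, Finset.sum_add_distrib,
    Finset.sum_ite_eq' , Finset.sum_ite_eq', Finset.sum_ite, Finset.sum_const, Finset.sum_const]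
  simp [ccard, mul_comm]

end aux

section aux2
variable {n : ℕ} (i j : Fin n) (hij : i ≠ j)

lemma inner_eq_sum {n : ℕ} (x y : EuclideanSpace ℝ (Fin n)) : ⟪x,y⟫_ℝ = ∑ k, x k * y k := by
  simp [PiLp.inner_apply, RCLike.inner_apply, conj_trivial, mul_comm]

lemma ccard_nonneg : 0 ≤ ccard i j := Nat.cast_nonneg _

lemma Npos (ε : ℝ) : 0 < 1 + ccard i j * ε^2 := by
  have := ccard_nonneg i j; nlinarith [sq_nonneg ε]

include hij in
lemma inner_Xv (ε θ₁ θ₂ : ℝ) :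
    ⟪Xv i j ε θ₁, Xv i j ε θ₂⟫_ℝ =
      (Real.cos θ₁ * Real.cos θ₂ + Real.sin θ₁ * Real.sin θ₂ + ccard i j * ε^2) /
        (1 + ccard i j * ε^2) := by
  rw [inner_eq_sum]
  have h : ∀ k, Xv i j ε θ₁ k * Xv i j ε θ₂ k =
      ((Real.sqrt (1 + ccard i j * ε^2))⁻¹ * (Real.sqrt (1 + ccard i j * ε^2))⁻¹) *
      ((if k = i then Real.cos θ₁ else if k = j then Real.sin θ₁ else ε) *
       (if k = i then Real.cos θ₂ else if k = j then Real.sin θ₂ else ε)) := by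
    intro k; rw [Xv_coord, Xv_coord]; ring
  rw [Finset.sum_congr rfl (fun k _ => h k), ← Finset.mul_sum, inner_UU i j hij]
  have hN := Npos i j ε
  rw [← mul_inv, Real.mul_self_sqrt hN.le, inv_mul_eq_div]

include hij in
lemma norm_Xv (ε θ : ℝ) : ‖Xv i j ε θ‖ = 1 := by
  have h : ‖Xv i j ε θ‖^2 = 1 := by
    rw [← real_inner_self_eq_norm_sq, inner_Xv i j hij]
    have hN := Npos i j ε
    rw [div_eq_one_iff_eq hN.ne']
    linear_combination Real.sin_sq_add_cos_sq θ
  rw [← Real.sqrt_sq (norm_nonneg _), h, Real.sqrt_one]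

include hij in
lemma Xv_pos (ε θ : ℝ) (hε : 0 < ε) (h1 : 0 < Real.cos θ) (h2 : 0 < Real.sin θ) (k : Fin n) :
    0 < Xv i j ε θ k := by
  rw [Xv_coord]
  have hN := Npos i j ε
  refine mul_pos (inv_pos.mpr (Real.sqrt_pos.mpr hN)) ?_
  by_cases hk1 : k = i <;> by_cases hk2 : k = j <;> simp [hk1, hk2, hij.symm] <;> assumption

lemma Xv_zero (θ : ℝ) : Xv i j 0 θ = Wv i j θ := by
  ext k
  rw [Xv_coord]
  norm_num
  rfl

lemma Xv_continuousAt (θ : ℝ) : ContinuousAt (fun ε : ℝ => Xv i j ε θ) 0 := by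
  have h1 : ContinuousAt (fun ε : ℝ => (Real.sqrt (1 + ccard i j * ε^2))⁻¹) 0 := by
    refine ContinuousAt.inv₀ ?_ ?_
    · exact (Real.continuous_sqrt.comp (by continuity)).continuousAt
    · norm_num
  have h2 : Continuous (fun ε : ℝ => Wv i j θ + ε • Zv i j) := by continuity
  exact h1.smul h2.continuousAt

include hij in
lemma q_Wv (A : Matrix (Fin n) (Fin n) ℝ) (θ : ℝ) :
    ⟪mulVecE A (Wv i j θ), Wv i j θ⟫_ℝ =
      (A i i * Real.cos θ + A i j * Real.sin θ) * Real.cos θ +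
      (A j i * Real.cos θ + A j j * Real.sin θ) * Real.sin θ := by
  rw [inner_eq_sum]
  have h : ∀ k, mulVecE A (Wv i j θ) k = A k i * Real.cos θ + A k j * Real.sin θ := by
    intro k
    exact sum_mul_Wv i j hij (fun l => A k l) θ
  rw [Finset.sum_congr rfl (fun k _ => by rw [h k])]
  exact sum_mul_Wv i j hij _ θ

lemma q_continuous (A : Matrix (Fin n) (Fin n) ℝ) :
    Continuous (fun x : EuclideanSpace ℝ (Fin n) => ⟪mulVecE A x, x⟫_ℝ) := by
  have h1 : Continuous (fun x : EuclideanSpace ℝ (Fin n) => mulVecE A x) := by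
    have e : Continuous (fun x : Fin n → ℝ => (fun i => ∑ l, A i l * x l : Fin n → ℝ)) :=
      continuous_pi fun i => continuous_finset_sum _ fun l _ =>
        continuous_const.mul (continuous_apply l)
    exact (PiLp.continuous_toLp 2 (fun _ : Fin n => ℝ)).comp
      (e.comp (PiLp.continuous_ofLp 2 (fun _ : Fin n => ℝ)))
  exact h1.inner continuous_id

end aux2

lemma geoSeg_continuousAt {n : ℕ} (t : ℝ) (x₀ y₀ : EuclideanSpace ℝ (Fin n))
    (h : Real.sqrt (1 - ⟪x₀, y₀⟫_ℝ^2) ≠ 0) :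
    ContinuousAt (fun p : EuclideanSpace ℝ (Fin n) × EuclideanSpace ℝ (Fin n) =>
      geoSeg p.1 p.2 t) (x₀, y₀) := by
  have hi : ContinuousAt (fun p : EuclideanSpace ℝ (Fin n) × EuclideanSpace ℝ (Fin n) =>
      ⟪p.1, p.2⟫_ℝ) (x₀, y₀) := continuous_inner.continuousAt
  have harc : ContinuousAt (fun p : EuclideanSpace ℝ (Fin n) × EuclideanSpace ℝ (Fin n) =>
      Real.cos (t * Real.arccos ⟪p.1, p.2⟫_ℝ)) (x₀, y₀) :=
    (Real.continuous_cos.continuousAt).comp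
      ((continuousAt_const.mul ((Real.continuous_arccos.continuousAt).comp hi)))
  have hsin : ContinuousAt (fun p : EuclideanSpace ℝ (Fin n) × EuclideanSpace ℝ (Fin n) =>
      Real.sin (t * Real.arccos ⟪p.1, p.2⟫_ℝ)) (x₀, y₀) :=
    (Real.continuous_sin.continuousAt).comp
      ((continuousAt_const.mul ((Real.continuous_arccos.continuousAt).comp hi)))
  have hden : ContinuousAt (fun p : EuclideanSpace ℝ (Fin n) × EuclideanSpace ℝ (Fin n) =>
      Real.sqrt (1 - ⟪p.1, p.2⟫_ℝ^2)) (x₀, y₀) :=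
    (Real.continuous_sqrt.continuousAt).comp (continuousAt_const.sub (hi.pow 2))
  exact ((harc.sub ((hi.mul hsin).div hden h)).smul continuousAt_fst).add
    ((hsin.div hden h).smul continuousAt_snd)

section eval
variable {n : ℕ} (i j : Fin n) (hij : i ≠ j)
open Real

include hij in
lemma inner_Wv (θ₁ θ₂ : ℝ) : ⟪Wv i j θ₁, Wv i j θ₂⟫_ℝ = Real.cos (θ₂ - θ₁) := by
  rw [inner_eq_sum]
  have h := inner_UU i j hij 0 θ₁ θ₂
  simp only [mul_zero, zero_pow, ne_eq, OfNat.ofNat_ne_zero, not_false_eq_true, add_zero] at h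
  rw [show (∑ k, Wv i j θ₁ k * Wv i j θ₂ k) =
    ∑ k, (if k = i then Real.cos θ₁ else if k = j then Real.sin θ₁ else (0:ℝ)) *
         (if k = i then Real.cos θ₂ else if k = j then Real.sin θ₂ else (0:ℝ)) from rfl, h,
    Real.cos_sub]
  ring

include hij in
lemma geoSeg_Wv (φ : ℝ) (h0 : 0 < φ) (hπ : φ < Real.pi) :
    geoSeg (Wv i j (φ/4)) (Wv i j (φ/4 + Real.pi/4)) (φ/Real.pi) = Wv i j (φ/2) := by
  have hpi := Real.pi_pos
  have hinner : ⟪Wv i j (φ/4), Wv i j (φ/4 + Real.pi/4)⟫_ℝ = Real.cos (Real.pi/4) := by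
    rw [inner_Wv i j hij]; norm_num
  have harc : Real.arccos (Real.cos (Real.pi/4)) = Real.pi/4 :=
    Real.arccos_cos (by positivity) (by linarith)
  have hs4 : 0 < Real.sin (Real.pi/4) := Real.sin_pos_of_pos_of_lt_pi (by positivity) (by linarith)
  have hsq : Real.sqrt (1 - Real.cos (Real.pi/4)^2) = Real.sin (Real.pi/4) := by
    rw [← Real.sin_sq, Real.sqrt_sq hs4.le]
  have ht : (φ/Real.pi) * (Real.pi/4) = φ/4 := by field_simp
  unfold geoSeg
  rw [hinner, harc, ht, hsq]
  ext k
  have hco : ∀ (α β : ℝ) (x y : EuclideanSpace ℝ (Fin n)), (α • x + β • y) k = α * x k + β * y k :=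
    fun α β x y => rfl
  rw [hco]
  have h2 : Real.sqrt 2 ≠ 0 := by positivity
  have hpy := Real.sin_sq_add_cos_sq (φ/4)
  have hs2 : Real.sqrt 2 ^ 2 = 2 := Real.sq_sqrt (by norm_num)
  by_cases hk1 : k = i
  · subst hk1
    simp only [Wv, if_pos rfl, ↓reduceIte]
    rw [Real.cos_add, Real.cos_pi_div_four, Real.sin_pi_div_four,
      show φ/2 = 2*(φ/4) by ring, Real.cos_two_mul]
    field_simp
    linear_combination (-1) * hpy
  · by_cases hk2 : k = j
    · subst hk2
      simp only [Wv, if_neg (Ne.symm hij), if_pos rfl, ↓reduceIte]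
      rw [Real.sin_add, Real.cos_pi_div_four, Real.sin_pi_div_four,
        show φ/2 = 2*(φ/4) by ring, Real.sin_two_mul]
      field_simp
      ring
    · simp [Wv, hk1, hk2]

end eval

set_option maxHeartbeats 3000000 in
/-- If the quadratic function `q_A(x) = ⟪Ax, x⟫` of a symmetric matrix `A` is spherically
quasi-convex on `C = 𝕊^{n-1} ∩ ℝⁿ₊₊`, then `A` is a Z-matrix, i.e. its off-diagonal
entries are nonpositive. -/
theorem quadratic_sph_quasiconvex_implies_Z_matrix {n : ℕ}
    (A : Matrix (Fin n) (Fin n) ℝ) (hA : A.IsSymm)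
    (hq : SphQuasiConvexOn (Metric.sphere 0 1 ∩ {x | ∀ i, 0 < x i})
      (fun x => ⟪mulVecE A x, x⟫_ℝ)) :
    ∀ i j : Fin n, i ≠ j → A i j ≤ 0 := by
  intro i j hij
  by_contra hcon
  push_neg at hcon
  have hb : 0 < A i j := hcon
  have hAji : A j i = A i j := hA.apply i j
  set a := A i i with ha
  set dd := A j j with hdd
  set b := A i j with hbdef
  have hpi := Real.pi_pos
  set R := Real.sqrt (((a-dd)/2)^2 + b^2) with hRdef
  have hR : 0 < R := Real.sqrt_pos.mpr (by positivity)
  have hRsq : R^2 = ((a-dd)/2)^2 + b^2 := Real.sq_sqrt (by positivity)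
  have hle1 : (a-dd)/(2*R) ≤ 1 := by
    rw [div_le_one (by positivity)]; nlinarith [sq_nonneg ((a-dd)/2 - R)]
  have hge1 : -1 ≤ (a-dd)/(2*R) := by
    rw [le_div_iff₀ (by positivity)]; nlinarith [sq_nonneg ((a-dd)/2 + R)]
  set φ := Real.arccos ((a-dd)/(2*R)) with hφdef
  have hcosφ : Real.cos φ = (a-dd)/(2*R) := Real.cos_arccos hge1 hle1
  have hsinφ : Real.sin φ = b/R := by
    rw [hφdef, Real.sin_arccos]
    have h1 : 1 - ((a-dd)/(2*R))^2 = (b/R)^2 := by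
      field_simp
      linear_combination 4*hRsq
    rw [h1, Real.sqrt_sq (by positivity)]
  have hsφpos : 0 < Real.sin φ := by rw [hsinφ]; positivity
  have hφ0 : 0 < φ := by
    rcases (Real.arccos_nonneg ((a-dd)/(2*R))).lt_or_eq with h|h
    · exact h
    · exfalso; rw [hφdef, ← h] at hsφpos; simp at hsφpos
  have hφπ : φ < Real.pi := by
    rcases (Real.arccos_le_pi ((a-dd)/(2*R))).lt_or_eq with h|h
    · exact h
    · exfalso; rw [hφdef, h] at hsφpos; simp at hsφpos
  clear_value a dd b R φ
  set θ₁ := φ/4 with hθ₁def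
  set θ₂ := φ/4 + Real.pi/4 with hθ₂def
  have hθ1a : 0 < θ₁ := by rw [hθ₁def]; linarith
  have hθ1b : θ₁ < Real.pi/2 := by rw [hθ₁def]; linarith
  have hθ2a : 0 < θ₂ := by rw [hθ₂def]; linarith
  have hθ2b : θ₂ < Real.pi/2 := by rw [hθ₂def]; linarith
  clear_value θ₁ θ₂
  have hc1pos : 0 < Real.cos θ₁ := Real.cos_pos_of_mem_Ioo ⟨by linarith, hθ1b⟩
  have hs1pos : 0 < Real.sin θ₁ := Real.sin_pos_of_pos_of_lt_pi hθ1a (by linarith)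
  have hc2pos : 0 < Real.cos θ₂ := Real.cos_pos_of_mem_Ioo ⟨by linarith, hθ2b⟩
  have hs2pos : 0 < Real.sin θ₂ := Real.sin_pos_of_pos_of_lt_pi hθ2a (by rw [hθ₂def]; linarith)
  have hts0 : (0:ℝ) ≤ φ/Real.pi := div_nonneg hφ0.le hpi.le
  have hts1 : φ/Real.pi ≤ 1 := by rw [div_le_one hpi]; linarith
  set qf := (fun x : EuclideanSpace ℝ (Fin n) => ⟪mulVecE A x, x⟫_ℝ) with hqf
  -- the inequality for each ε > 0
  have hineq : ∀ ε ∈ Set.Ioi (0:ℝ),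
      qf (geoSeg (Xv i j ε θ₁) (Xv i j ε θ₂) (φ/Real.pi)) ≤
        max (qf (Xv i j ε θ₁)) (qf (Xv i j ε θ₂)) := by
    intro ε hε
    rw [Set.mem_Ioi] at hε
    set x := Xv i j ε θ₁ with hx
    set y := Xv i j ε θ₂ with hy
    have hnx : ‖x‖ = 1 := norm_Xv i j hij ε θ₁
    have hny : ‖y‖ = 1 := norm_Xv i j hij ε θ₂
    have hpx : ∀ k, 0 < x k := Xv_pos i j hij ε θ₁ hε hc1pos hs1pos
    have hpy : ∀ k, 0 < y k := Xv_pos i j hij ε θ₂ hε hc2pos hs2pos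
    have hNpos := Npos i j ε
    have hcc := ccard_nonneg i j
    have hinner : ⟪x, y⟫_ℝ =
        (Real.cos θ₁ * Real.cos θ₂ + Real.sin θ₁ * Real.sin θ₂ + ccard i j * ε^2) /
          (1 + ccard i j * ε^2) := inner_Xv i j hij ε θ₁ θ₂
    clear_value x y
    have hi0 : 0 < ⟪x, y⟫_ℝ := by
      rw [hinner]
      apply div_pos _ hNpos
      nlinarith [sq_nonneg ε]
    have hi1 : ⟪x, y⟫_ℝ < 1 := by
      rw [hinner, div_lt_one hNpos]
      have hcs : Real.cos θ₁ * Real.cos θ₂ + Real.sin θ₁ * Real.sin θ₂ = Real.cos (θ₂ - θ₁) := by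
        rw [Real.cos_sub]; ring
      have : Real.cos (θ₂ - θ₁) < 1 := by
        have h1 : 0 < Real.sin (θ₂ - θ₁) := by
          rw [hθ₂def, hθ₁def, show φ/4 + Real.pi/4 - φ/4 = Real.pi/4 by ring]
          exact Real.sin_pos_of_pos_of_lt_pi (by positivity) (by linarith)
        nlinarith [Real.sin_sq_add_cos_sq (θ₂ - θ₁)]
      linarith [hcs, this]
    have hxC : x ∈ (Metric.sphere (0:EuclideanSpace ℝ (Fin n)) 1 ∩ {x | ∀ i, 0 < x i}) :=
      ⟨mem_sphere_zero_iff_norm.mpr hnx, hpx⟩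
    have hyC : y ∈ (Metric.sphere (0:EuclideanSpace ℝ (Fin n)) 1 ∩ {x | ∀ i, 0 < x i}) :=
      ⟨mem_sphere_zero_iff_norm.mpr hny, hpy⟩
    have hyne : y ≠ -x := by
      intro h
      have h2 : y i = -(x i) := by rw [h]; rfl
      have := hpx i; have := hpy i; linarith
    have hmin : IsMinGeodesic (geoSeg x y) x y := ⟨hnx, hny, Or.inl ⟨hyne, rfl⟩⟩
    have hC : ∀ t ∈ Set.Icc (0:ℝ) 1,
        geoSeg x y t ∈ (Metric.sphere (0:EuclideanSpace ℝ (Fin n)) 1 ∩ {x | ∀ i, 0 < x i}) :=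
      fun t ht => geoSeg_mem x y hnx hny hi0 hi1 hpx hpy t ht
    have happ := hq x hxC y hyC (geoSeg x y) hmin hC 0 (φ/Real.pi) 1
      le_rfl hts0 hts1 le_rfl
    rw [geoSeg_zero, geoSeg_one x y (by linarith) hi1] at happ
    exact happ
  -- pass to the limit ε → 0⁺
  have hcW : ⟪Wv i j θ₁, Wv i j θ₂⟫_ℝ = Real.cos (Real.pi/4) := by
    rw [inner_Wv i j hij]; rw [hθ₂def, hθ₁def]; norm_num
  have hs4 : 0 < Real.sin (Real.pi/4) :=
    Real.sin_pos_of_pos_of_lt_pi (by positivity) (by linarith)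
  have hden0 : Real.sqrt (1 - ⟪Wv i j θ₁, Wv i j θ₂⟫_ℝ^2) ≠ 0 := by
    rw [hcW]
    refine ne_of_gt (Real.sqrt_pos.mpr ?_)
    nlinarith [Real.sin_sq_add_cos_sq (Real.pi/4)]
  have hXp : ContinuousAt (fun ε : ℝ => (Xv i j ε θ₁, Xv i j ε θ₂)) 0 :=
    (Xv_continuousAt i j θ₁).prodMk (Xv_continuousAt i j θ₂)
  have hGeoAt : ContinuousAt
      (fun p : EuclideanSpace ℝ (Fin n) × EuclideanSpace ℝ (Fin n) => geoSeg p.1 p.2 (φ/Real.pi))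
      ((fun ε : ℝ => (Xv i j ε θ₁, Xv i j ε θ₂)) 0) := by
    simp only [Xv_zero]
    exact geoSeg_continuousAt (φ/Real.pi) _ _ hden0
  have hGX0 := ContinuousAt.comp (f := fun ε : ℝ => (Xv i j ε θ₁, Xv i j ε θ₂)) (x := (0:ℝ)) hGeoAt hXp
  have hGX : ContinuousAt (fun ε : ℝ => geoSeg (Xv i j ε θ₁) (Xv i j ε θ₂) (φ/Real.pi)) 0 := hGX0
  have hF0 := ((q_continuous A).continuousAt).comp hGX
  have hF : ContinuousAt (fun ε : ℝ => qf (geoSeg (Xv i j ε θ₁) (Xv i j ε θ₂) (φ/Real.pi))) 0 := by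
    rw [hqf]; exact hF0
  have hG1 := ((q_continuous A).continuousAt).comp (Xv_continuousAt i j θ₁)
  have hG2 := ((q_continuous A).continuousAt).comp (Xv_continuousAt i j θ₂)
  have hG : ContinuousAt (fun ε : ℝ => max (qf (Xv i j ε θ₁)) (qf (Xv i j ε θ₂))) 0 := by
    rw [hqf]; exact hG1.max hG2
  have hT1 := hF.tendsto.mono_left (nhdsWithin_le_nhds (s := Set.Ioi (0:ℝ)))
  have hT2 := hG.tendsto.mono_left (nhdsWithin_le_nhds (s := Set.Ioi (0:ℝ)))
  have hEv : ∀ᶠ ε in nhdsWithin 0 (Set.Ioi (0:ℝ)),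
      qf (geoSeg (Xv i j ε θ₁) (Xv i j ε θ₂) (φ/Real.pi)) ≤
        max (qf (Xv i j ε θ₁)) (qf (Xv i j ε θ₂)) := by
    filter_upwards [self_mem_nhdsWithin] with ε hε using hineq ε hε
  have hlim := le_of_tendsto_of_tendsto hT1 hT2 hEv
  simp only [Xv_zero] at hlim
  rw [hθ₁def, hθ₂def] at hlim
  rw [geoSeg_Wv i j hij φ hφ0 hφπ] at hlim
  rw [hqf] at hlim
  simp only [q_Wv i j hij A] at hlim
  -- rewrite in terms of gv
  rw [← ha, ← hdd, hAji, ← hbdef] at hlim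
  have hgv : ∀ θ : ℝ,
      (a * Real.cos θ + b * Real.sin θ) * Real.cos θ +
        (b * Real.cos θ + dd * Real.sin θ) * Real.sin θ =
      (a+dd)/2 + R * Real.cos (2*θ - φ) := by
    intro θ
    rw [Real.cos_sub, hcosφ, hsinφ, Real.cos_two_mul, Real.sin_two_mul]
    field_simp
    linear_combination (2*dd) * Real.sin_sq_add_cos_sq θ
  rw [hgv, hgv, hgv] at hlim
  rw [show 2*(φ/2) - φ = 0 by ring, Real.cos_zero, mul_one] at hlim
  rw [show 2*(φ/4) - φ = -(φ/2) by ring, Real.cos_neg] at hlim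
  rw [show 2*(φ/4 + Real.pi/4) - φ = Real.pi/2 - φ/2 by ring, Real.cos_pi_div_two_sub] at hlim
  -- final contradiction
  have hhalf0 : 0 < φ/2 := by linarith
  have hhalfπ : φ/2 < Real.pi/2 := by linarith
  have hsinhalf : 0 < Real.sin (φ/2) := Real.sin_pos_of_pos_of_lt_pi hhalf0 (by linarith)
  have hcoshalf : 0 < Real.cos (φ/2) := Real.cos_pos_of_mem_Ioo ⟨by linarith, hhalfπ⟩
  have hc_lt : Real.cos (φ/2) < 1 := by
    nlinarith [Real.sin_sq_add_cos_sq (φ/2)]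
  have hs_lt : Real.sin (φ/2) < 1 := by
    nlinarith [Real.sin_sq_add_cos_sq (φ/2)]
  have h1 : (a+dd)/2 + R * Real.cos (φ/2) < (a+dd)/2 + R := by nlinarith
  have h2 : (a+dd)/2 + R * Real.sin (φ/2) < (a+dd)/2 + R := by nlinarith
  have := max_lt h1 h2
  linarith [hlim, this]
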